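/- For any positive real ε and any smooth function ρ: ℝ → ℝ with ρ(r) = 1/2 for |r| > 1/2, and any t ≥ 0 and integer m, every solution b: ℝ → ℂ of the ODE b'(r) = −2π(1+t)(m − ρ(r))·b(r) that is square-integrable on ℝ is identically zero. -/

import Mathlib

open MeasureTheory intervalIntegral

/-- Statement 0: any L² solution of b'(r) = −2π(1+t)(m − ρ(r))·a(r) is identically zero,
where ρ is smooth and equals 1/2 for |r| > 1/2. -/
theorem stmt_1 (ε : ℝ) (hε : 0 < ε) (ρ : ℝ → ℝ) (hρ : ContDiff ℝ (⊤ : ℕ∞) ρ)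
    (hflat : ∀ r : ℝ, 1 / 2 < |r| → ρ r = 1 / 2) (t : ℝ) (ht : 0 ≤ t) (m : ℤ)
    (a : ℝ → ℂ)
    (hode : ∀ r : ℝ,
      HasDerivAt a (-((2 * Real.pi * (1 + t) * ((m : ℝ) - ρ r) : ℝ) : ℂ) * a r) r)
    (hL2 : MemLp a 2 (volume : Measure ℝ)) :
    ∀ r : ℝ, a r = 0 := by
  set c : ℝ → ℝ := fun r => -(2 * Real.pi * (1 + t) * ((m : ℝ) - ρ r)) with hc_def
  have hc_cont : Continuous c := by
    apply Continuous.neg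
    exact (continuous_const.mul (continuous_const.sub hρ.continuous))
  set F : ℝ → ℝ := fun r => ∫ s in (0:ℝ)..r, c s with hF_def
  have hF : ∀ r, HasDerivAt F (c r) r := by
    intro r
    exact integral_hasDerivAt_right (hc_cont.intervalIntegrable _ _)
      hc_cont.aestronglyMeasurable.stronglyMeasurableAtFilter hc_cont.continuousAt
  -- representation a r = exp (F r) * a 0
  have hode' : ∀ r, HasDerivAt a ((c r : ℂ) * a r) r := by
    intro r
    have := hode r
    convert this using 2
    push_cast [hc_def]
    ring
  have hrep : ∀ r, a r = Complex.exp (F r) * a 0 := by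
    have key : ∀ r, Complex.exp (-(F r : ℂ)) * a r = Complex.exp (-(F 0 : ℂ)) * a 0 := by
      intro r
      set g : ℝ → ℂ := fun r => Complex.exp (-(F r : ℂ)) * a r with hg
      have hg' : ∀ x, HasDerivAt g 0 x := by
        intro x
        have h1 : HasDerivAt (fun r : ℝ => Complex.exp (-(F r : ℂ)))
            (-(c x : ℂ) * Complex.exp (-(F x : ℂ))) x := by
          have hF' : HasDerivAt (fun r : ℝ => -(F r : ℂ)) (-(c x : ℂ)) x :=
            ((hF x).ofReal_comp).neg
          simpa [mul_comm] using hF'.cexp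
        have := h1.fun_mul (hode' x)
        exact this.congr_deriv (by ring)
      have := is_const_of_deriv_eq_zero (f := g) (fun x => (hg' x).differentiableAt)
        (fun x => (hg' x).deriv) r 0
      simpa [hg] using this
    intro r
    have h0 : F 0 = 0 := by simp [hF_def]
    have := key r
    rw [h0] at this
    simp only [Complex.ofReal_zero, neg_zero, Complex.exp_zero, one_mul] at this
    rw [← this, ← mul_assoc, ← Complex.exp_add]
    simp
  -- now suppose a 0 ≠ 0
  -- norms
  have hnorm : ∀ r, ‖a r‖ = Real.exp (F r) * ‖a 0‖ := by
    intro r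
    rw [hrep r]
    simp [Complex.norm_exp]
  set K : ℝ := 2 * Real.pi * (1 + t) * ((m : ℝ) - 1/2) with hK_def
  have hK : K ≠ 0 := by
    apply mul_ne_zero
    · positivity
    · intro h
      have h2 : (m : ℝ) = 1/2 := by linarith [sub_eq_zero.mp h]
      have h3 : ((2 * m : ℤ) : ℝ) = ((1 : ℤ) : ℝ) := by push_cast; linarith
      have := Int.cast_injective h3
      omega
  have hFray : ∀ u r : ℝ, (∀ s ∈ Set.uIcc u r, 1/2 < |s|) → F r = F u - K * (r - u) := by
    intro u r h
    have h1 : F u + ∫ s in u..r, c s = F r :=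
      intervalIntegral.integral_add_adjacent_intervals
        (hc_cont.intervalIntegrable _ _) (hc_cont.intervalIntegrable _ _)
    have h2 : (∫ s in u..r, c s) = ∫ s in u..r, (-K : ℝ) := by
      apply intervalIntegral.integral_congr
      intro s hs
      rw [hc_def]
      simp only
      rw [hflat s (h s hs), hK_def]
    rw [h2, intervalIntegral.integral_const, smul_eq_mul] at h1
    linarith
  -- main contradiction machinery
  by_contra hcon
  push_neg at hcon
  obtain ⟨r0, hr0⟩ := hcon
  have ha0 : a 0 ≠ 0 := by
    intro h
    exact hr0 (by rw [hrep r0, h, mul_zero])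
  have main : ∀ (s₀ : ℝ) (S : Set ℝ), volume S = ⊤ → (∀ r ∈ S, F s₀ ≤ F r) → False := by
    intro s₀ S hS hFS
    set δ : ℝ := Real.exp (F s₀) * ‖a 0‖ with hδ
    have hδpos : 0 < δ := mul_pos (Real.exp_pos _) (norm_pos_iff.mpr ha0)
    have hg : Integrable (fun x => ‖a x‖ ^ ((2 : ENNReal).toReal)) volume :=
      hL2.integrable_norm_rpow (by norm_num) (by norm_num)
    have hfin := hg.measure_ge_lt_top (ε := δ ^ ((2 : ENNReal).toReal))
      (Real.rpow_pos_of_pos hδpos _)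
    have hsub : S ⊆ {x | δ ^ ((2 : ENNReal).toReal) ≤ ‖a x‖ ^ ((2 : ENNReal).toReal)} := by
      intro x hx
      have hb : δ ≤ ‖a x‖ := by
        rw [hnorm x, hδ]
        exact mul_le_mul_of_nonneg_right (Real.exp_le_exp.mpr (hFS x hx)) (norm_nonneg _)
      exact Real.rpow_le_rpow hδpos.le hb (by simp)
    have := (measure_mono hsub).trans_lt hfin
    rw [hS] at this
    exact (lt_irrefl _ this).elim
  rcases lt_or_gt_of_ne hK with hKneg | hKpos
  · -- K < 0 : grow at +∞, use S = Ici 1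
    apply main 1 (Set.Ici 1)
    · simp
    · intro r hr
      have hr1 : (1:ℝ) ≤ r := hr
      have heq := hFray 1 r (by
        intro s hs
        rw [Set.uIcc_of_le hr1] at hs
        have : (1:ℝ) ≤ s := hs.1
        rw [abs_of_pos (by linarith)]
        linarith)
      nlinarith
  · -- K > 0 : grow at -∞, use S = Iic (-1)
    apply main (-1) (Set.Iic (-1))
    · simp
    · intro r hr
      have hr1 : r ≤ (-1:ℝ) := hr
      have heq := hFray (-1) r (by
        intro s hs
        rw [Set.uIcc_of_ge hr1] at hs
        have : s ≤ (-1:ℝ) := hs.2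
        rw [abs_of_neg (by linarith)]
        linarith)
      nlinarith
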